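/- arXiv:2211.08511 — 2 statements merged into one kernel-verified Lean document; each statement's English description precedes it below -/
import Mathlib

section
/- Let q ≥ 5 be a prime power and let x ∈ F_q be maximally hyperbolic (T² - 3xT + 1 has a root λ generating F_q*). Let (y,z) ≠ (0,0) in F_q² with x² + y² + z² = 3xyz. If L_xᵐ fixes the column vector (y, z), where L_x = [[3x,-1],[1,0]], then (q-1) divides m. -/
/-!
The roots `λ` and `λ⁻¹ = 3x - λ` of `T² - 3xT + 1` are the eigenvalues of `L_x`, with eigenvectors
`(λ, 1)` and `(λ⁻¹, 1)`. They are distinct since `λ` has order `q - 1 > 2`, so these eigenvectors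
form a basis. A nonzero vector fixed by `L_xᵐ` has a nonzero coordinate in this basis, which forces
`λᵐ = 1` or `λ⁻ᵐ = 1`; either way the order `q - 1` of `λ` divides `m`.
-/

open Matrix Module

theorem sq_ne_one_of_forall_mem_zpowers {G : Type*} [Group G] [Finite G] {g : G}
    (hg : ∀ h, h ∈ Subgroup.zpowers g) (hG : 2 < Nat.card G) : g ^ 2 ≠ 1 := fun h =>
  (Nat.le_of_dvd two_pos (orderOf_eq_card_of_forall_mem_zpowers hg ▸
    orderOf_dvd_of_pow_eq_one h)).not_gt hG

theorem Module.End.pow_apply_of_apply_eq_smul {R M : Type*} [CommSemiring R] [AddCommMonoid M]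
    [Module R M] {f : End R M} {c : R} {v : M} (h : f v = c • v) (n : ℕ) :
    (f ^ n) v = c ^ n • v := by
  induction n with
  | zero => simp
  | succ n ih => rw [pow_succ', End.mul_apply, ih, map_smul, h, smul_smul, pow_succ]

theorem Module.End.exists_eq_one_of_apply_eq_self {R M ι : Type*} [CommRing R] [IsDomain R]
    [AddCommGroup M] [Module R M] [Fintype ι] {f : End R M} (b : Basis ι R M) {c : ι → R}
    (hb : ∀ i, f (b i) = c i • b i) {v : M} (hv : v ≠ 0) (hfix : f v = v) : ∃ i, c i = 1 := by
  have hrepr : ∀ i, c i * b.repr v i = b.repr v i := fun i => by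
    have hfv : f v = ∑ j, (c j * b.repr v j) • b j := by
      conv_lhs => rw [← b.sum_repr v]
      simp only [map_sum, map_smul, hb, smul_smul, mul_comm]
    simpa only [hfix, b.repr_sum_self] using (congrArg (b.repr · i) hfv).symm
  obtain ⟨i, hi⟩ : ∃ i, b.repr v i ≠ 0 := by
    by_contra! h
    exact hv (b.repr.map_eq_zero_iff.mp (Finsupp.ext h))
  exact ⟨i, (mul_eq_right₀ hi).mp (hrepr i)⟩

section Companion

variable {K : Type*} [Field K]

theorem companion_mulVec_eq_smul {t l : K} (h : l ^ 2 - t * l + 1 = 0) :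
    !![t, -1; 1, 0] *ᵥ ![l, 1] = l • ![l, 1] := by
  have hl : l * t + -1 = l * l := by linear_combination -h
  ext i
  fin_cases i
  · simpa using hl
  · simp

theorem linearIndependent_pair_of_ne {l μ : K} (h : l ≠ μ) :
    LinearIndependent K ![![l, 1], ![μ, 1]] := by
  rw [LinearIndependent.pair_iff]
  intro s t hst
  have h0 : s * l + t * μ = 0 := by simpa using congrFun hst 0
  have h1 : s + t = 0 := by simpa using congrFun hst 1
  have hs : s * (l - μ) = 0 := by linear_combination h0 - μ * h1
  have hs0 : s = 0 := (mul_eq_zero.mp hs).resolve_right (sub_ne_zero.mpr h)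
  exact ⟨hs0, by linear_combination h1 - hs0⟩

end Companion

theorem stmt_10_general (F : Type*) [Field F] [Fintype F] (hq : 5 ≤ Fintype.card F)
    (x : F)
    (hmax : ∃ u : Fˣ, (u : F) ^ 2 - 3 * x * (u : F) + 1 = 0 ∧
      ∀ v : Fˣ, v ∈ Subgroup.zpowers u)
    (y z : F) (hyz : (y, z) ≠ (0, 0))
    (m : ℕ)
    (hfix : ((!![3 * x, -1; 1, 0] : Matrix (Fin 2) (Fin 2) F) ^ m).mulVec ![y, z]
      = ![y, z]) :
    (Fintype.card F - 1) ∣ m := by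
  obtain ⟨u, hu, hgen⟩ := hmax
  have hcard : Nat.card Fˣ = Fintype.card F - 1 := by
    rw [Nat.card_units, Nat.card_eq_fintype_card]
  set l : F := (u : F)
  set μ : F := 3 * x - l
  have hlμ : l * μ = 1 := by linear_combination -hu
  have hμ : μ ^ 2 - 3 * x * μ + 1 = 0 := by linear_combination hu
  have hne : l ≠ μ := fun h => sq_ne_one_of_forall_mem_zpowers hgen (by omega)
    (Units.ext (by simpa [sq, ← h] using hlμ))
  let b := basisOfLinearIndependentOfCardEqFinrank (linearIndependent_pair_of_ne hne) (by simp)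
  have hb : ∀ i, (toLin' !![3 * x, -1; 1, 0] ^ m) (b i) = (![l, μ] i ^ m) • b i := by
    intro i
    refine End.pow_apply_of_apply_eq_smul ?_ m
    fin_cases i
    · simpa [b] using companion_mulVec_eq_smul hu
    · simpa [b] using companion_mulVec_eq_smul hμ
  have hv : ![y, z] ≠ 0 := fun h => hyz (by simpa using ⟨congrFun h 0, congrFun h 1⟩)
  obtain ⟨i, hi⟩ := End.exists_eq_one_of_apply_eq_self b hb hv 
    (by rw [← toLin'_pow, toLin'_apply, hfix])
  have hlm : l ^ m = 1 := by
    fin_cases i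
    · simpa using hi
    · simp only [Fin.mk_one, cons_val_one, cons_val_fin_one] at hi
      simpa [mul_pow, hi] using congrArg (· ^ m) hlμ
  rw [← hcard, ← orderOf_eq_card_of_forall_mem_zpowers hgen]
  exact orderOf_dvd_of_pow_eq_one (Units.ext (by simpa using hlm))

/-- If `x` is maximally hyperbolic and `L_xᵐ` fixes a nonzero vector `(y,z)` on the
Markoff fiber, then `q - 1` divides `m`. -/
theorem stmt_10 (F : Type*) [Field F] [Fintype F] (hq : 5 ≤ Fintype.card F)
    (x : F)
    (hmax : ∃ u : Fˣ, (u : F) ^ 2 - 3 * x * (u : F) + 1 = 0 ∧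
      ∀ v : Fˣ, v ∈ Subgroup.zpowers u)
    (y z : F) (hyz : (y, z) ≠ (0, 0))
    (hM : x ^ 2 + y ^ 2 + z ^ 2 = 3 * x * y * z)
    (m : ℕ)
    (hfix : ((!![3 * x, -1; 1, 0] : Matrix (Fin 2) (Fin 2) F) ^ m).mulVec ![y, z]
      = ![y, z]) :
    (Fintype.card F - 1) ∣ m :=
  stmt_10_general F hq x hmax y z hyz m hfix
end

section
/- Let q ≥ 5 be a prime power and let x ∈ F_q be maximally hyperbolic with λ ∈ F_q* a generator satisfying λ² - 3xλ + 1 = 0. Let (y,z) and (y',z') be nonzero vectors in F_q² with L_xⁿ(y,z) = (y',z') for some n ≥ 0, where L_x = [[3x,-1],[1,0]]. Then at least one of the quantities y - λ⁻¹z and -y + λz is nonzero, and for such a nonzero coordinate the equation λⁿ·(y - λ⁻¹z) = y' - λ⁻¹z' (respectively λ⁻ⁿ·(-y + λz) = -y' + λz') holds, so n is determined modulo q-1 by a discrete logarithm in F_q*. -/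
/-!
`L = !![s, -1; 1, 0]` has characteristic polynomial `T² - sT + 1`, so for each root `μ` the row
vector `(1, -μ⁻¹)` is a left eigenvector of `L` with eigenvalue `μ`; as `μ⁻¹` is the other root,
`(-1, μ)` is one with eigenvalue `μ⁻¹`. Along an orbit `Lⁿ(y, z) = (y', z')` the two coordinates
`y - μ⁻¹z` and `-y + μz` are therefore multiplied by `μⁿ` and `μ⁻ⁿ`. They cannot both vanish
when `μ² ≠ 1`, which holds because `μ` generates `F*` and `|F*| ≥ 4`; dividing by a nonzero one
determines `μⁿ`, hence `n` modulo the order `q - 1` of `μ`.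
-/

open Matrix

section Companion

variable {K : Type*} [Field K] {s μ : K}

lemma ne_zero_of_sq_sub_mul_add_one_eq_zero (hμ : μ ^ 2 - s * μ + 1 = 0) : μ ≠ 0 := by
  rintro rfl
  norm_num at hμ

lemma inv_sq_sub_mul_add_one_eq_zero (hμ : μ ^ 2 - s * μ + 1 = 0) :
    μ⁻¹ ^ 2 - s * μ⁻¹ + 1 = 0 := by
  have hμ0 := ne_zero_of_sq_sub_mul_add_one_eq_zero hμ
  field_simp
  linear_combination hμ

lemma companion_mulVec_eigen (hμ : μ ^ 2 - s * μ + 1 = 0) (v : Fin 2 → K) :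
    (!![s, -1; 1, 0] *ᵥ v) 0 - μ⁻¹ * (!![s, -1; 1, 0] *ᵥ v) 1 = μ * (v 0 - μ⁻¹ * v 1) := by
  have hμ0 := ne_zero_of_sq_sub_mul_add_one_eq_zero hμ
  simp only [mulVec, dotProduct, Fin.sum_univ_two, of_apply, cons_val', cons_val_zero,
    cons_val_one, empty_val', cons_val_fin_one]
  field_simp
  linear_combination -v 0 * hμ

lemma companion_pow_mulVec_eigen (hμ : μ ^ 2 - s * μ + 1 = 0) (v : Fin 2 → K) (n : ℕ) :
    (!![s, -1; 1, 0] ^ n *ᵥ v) 0 - μ⁻¹ * (!![s, -1; 1, 0] ^ n *ᵥ v) 1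
      = μ ^ n * (v 0 - μ⁻¹ * v 1) := by
  induction n with
  | zero => simp
  | succ n ih =>
    rw [pow_succ', ← mulVec_mulVec, companion_mulVec_eigen hμ, ih, pow_succ']
    ring

lemma eigen_coord_of_companion_pow_mulVec_eq (hμ : μ ^ 2 - s * μ + 1 = 0) {n : ℕ}
    {y z y' z' : K} (h : !![s, -1; 1, 0] ^ n *ᵥ ![y, z] = ![y', z']) :
    μ ^ n * (y - μ⁻¹ * z) = y' - μ⁻¹ * z' ∧
      μ⁻¹ ^ n * (-y + μ * z) = -y' + μ * z' := by
  have h₁ := companion_pow_mulVec_eigen hμ ![y, z] n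
  have h₂ := companion_pow_mulVec_eigen (inv_sq_sub_mul_add_one_eq_zero hμ) ![y, z] n
  simp only [h, inv_inv, cons_val_zero, cons_val_one] at h₁ h₂
  exact ⟨h₁.symm, by linear_combination h₂⟩

end Companion

lemma eigen_coords_ne_zero {K : Type*} [Field K] {μ y z : K} (hμ0 : μ ≠ 0) (hμ : μ ^ 2 ≠ 1)
    (hyz : (y, z) ≠ (0, 0)) : y - μ⁻¹ * z ≠ 0 ∨ -y + μ * z ≠ 0 := by
  by_contra! h
  obtain ⟨h₁, h₂⟩ := h
  have hz : z = 0 := by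
    have : (μ ^ 2 - 1) * z = 0 := by
      field_simp at h₁
      linear_combination μ * h₂ + h₁
    simpa [sub_eq_zero, hμ] using this
  have hy : y = 0 := by simpa [hz] using h₂
  exact hyz (by simp [hy, hz])

section Generator

variable {F : Type*} [Field F] [Fintype F] {u : Fˣ}

lemma orderOf_eq_card_sub_one_of_forall_mem_zpowers (hgen : ∀ v : Fˣ, v ∈ Subgroup.zpowers u) :
    orderOf u = Fintype.card F - 1 := by
  classical
  rw [orderOf_eq_card_of_forall_mem_zpowers hgen, Nat.card_eq_fintype_card, Fintype.card_units]

lemma sq_ne_one_of_forall_mem_zpowers_s18 (hq : 5 ≤ Fintype.card F)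
    (hgen : ∀ v : Fˣ, v ∈ Subgroup.zpowers u) : (u : F) ^ 2 ≠ 1 := by
  intro h
  have := orderOf_le_of_pow_eq_one two_pos (Units.ext (by push_cast; exact h))
  have := orderOf_eq_card_sub_one_of_forall_mem_zpowers hgen
  omega

end Generator

lemma modEq_orderOf_of_pow_mul_eq {F : Type*} [Field F] {u : Fˣ} {c : F} (hc : c ≠ 0) {n m : ℕ}
    (h : (u : F) ^ n * c = (u : F) ^ m * c) : n ≡ m [MOD orderOf u] :=
  pow_eq_pow_iff_modEq.mp (Units.ext (by push_cast; exact mul_right_cancel₀ hc h))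

theorem stmt_18_general (F : Type*) [Field F] [Fintype F] (hq : 5 ≤ Fintype.card F)
    (x : F) (u : Fˣ)
    (hroot : (u : F) ^ 2 - 3 * x * (u : F) + 1 = 0)
    (hgen : ∀ v : Fˣ, v ∈ Subgroup.zpowers u)
    (y z y' z' : F) (hyz : (y, z) ≠ (0, 0))
    (n : ℕ)
    (hn : ((!![3 * x, -1; 1, 0] : Matrix (Fin 2) (Fin 2) F) ^ n).mulVec ![y, z]
      = ![y', z']) :
    let l : F := (u : F)
    (y - l⁻¹ * z ≠ 0 ∨ -y + l * z ≠ 0) ∧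
    (y - l⁻¹ * z ≠ 0 → l ^ n * (y - l⁻¹ * z) = y' - l⁻¹ * z') ∧
    (-y + l * z ≠ 0 → (l⁻¹) ^ n * (-y + l * z) = -y' + l * z') ∧
    (∀ m : ℕ,
      ((!![3 * x, -1; 1, 0] : Matrix (Fin 2) (Fin 2) F) ^ m).mulVec ![y, z]
          = ![y', z'] →
      n ≡ m [MOD Fintype.card F - 1]) := by
  intro l
  have hord := orderOf_eq_card_sub_one_of_forall_mem_zpowers hgen
  have hne := eigen_coords_ne_zero u.ne_zero (sq_ne_one_of_forall_mem_zpowers_s18 hq hgen) hyz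
  obtain ⟨hn₁, hn₂⟩ := eigen_coord_of_companion_pow_mulVec_eq hroot hn
  refine ⟨hne, fun _ => hn₁, fun _ => hn₂, fun m hm => ?_⟩
  obtain ⟨hm₁, hm₂⟩ := eigen_coord_of_companion_pow_mulVec_eq hroot hm
  rcases hne with hc | hc
  · rw [← hord]
    exact modEq_orderOf_of_pow_mul_eq hc (hn₁.trans hm₁.symm)
  · rw [← hord, ← orderOf_inv]
    exact modEq_orderOf_of_pow_mul_eq hc (by push_cast; exact hn₂.trans hm₂.symm)

/-- Path-finding on a maximally hyperbolic fiber reduces to a discrete logarithm: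
with `U = [[1,-λ⁻¹],[-1,λ]]` diagonalizing `L_x`, at least one coordinate of
`U(y,z)` is nonzero, the corresponding equation `λⁿ(y - λ⁻¹z) = y' - λ⁻¹z'`
(resp. `λ⁻ⁿ(-y + λz) = -y' + λz'`) holds, and `n` is determined modulo `q - 1`. -/
theorem stmt_18 (F : Type*) [Field F] [Fintype F] (hq : 5 ≤ Fintype.card F)
    (x : F) (u : Fˣ)
    (hroot : (u : F) ^ 2 - 3 * x * (u : F) + 1 = 0)
    (hgen : ∀ v : Fˣ, v ∈ Subgroup.zpowers u)
    (y z y' z' : F) (hyz : (y, z) ≠ (0, 0)) (hyz' : (y', z') ≠ (0, 0))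
    (n : ℕ)
    (hn : ((!![3 * x, -1; 1, 0] : Matrix (Fin 2) (Fin 2) F) ^ n).mulVec ![y, z]
      = ![y', z']) :
    let l : F := (u : F)
    (y - l⁻¹ * z ≠ 0 ∨ -y + l * z ≠ 0) ∧
    (y - l⁻¹ * z ≠ 0 → l ^ n * (y - l⁻¹ * z) = y' - l⁻¹ * z') ∧
    (-y + l * z ≠ 0 → (l⁻¹) ^ n * (-y + l * z) = -y' + l * z') ∧
    (∀ m : ℕ,
      ((!![3 * x, -1; 1, 0] : Matrix (Fin 2) (Fin 2) F) ^ m).mulVec ![y, z]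
          = ![y', z'] →
      n ≡ m [MOD Fintype.card F - 1]) :=
  stmt_18_general F hq x u hroot hgen y z y' z' hyz n hn
end
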